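/- Let θ ∈ (0,π) and set s = Real.sqrt(sin(θ/2)), c = Real.sqrt(cos(θ/2)). The ℂ-linear span in ℂ¹⁶ of the set {ψ ⊗ (star∘ψ) : ψ : Fin 4 → ℂ with |ψ ℓ| = 1 for all ℓ} together with the three vectors ψ₁₄⊗φ₁₄, ψ₁₅⊗φ₁₅, ψ₁₆⊗φ₁₆, where (ψ₁₄,φ₁₄) = ((s,c,0,0),(c,s,0,0)), (ψ₁₅,φ₁₅) = ((0,s,c,0),(0,c,s,0)), (ψ₁₆,φ₁₆) = ((0,0,s,c),(0,0,c,s)), has dimension exactly 15. -/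

import Mathlib

open Matrix Complex Real

/-- The tensor (product) vector `x ⊗ y` in `ℂ¹⁶`. -/
noncomputable def tensorVec (x y : Fin 4 → ℂ) : Fin 4 × Fin 4 → ℂ :=
  fun p => x p.1 * y p.2

/-- The expectation `⟨v, W v⟩ = ∑ i, conj (v i) * (W *ᵥ v) i`. -/
noncomputable def expec (W : Matrix (Fin 4 × Fin 4) (Fin 4 × Fin 4) ℂ)
    (v : Fin 4 × Fin 4 → ℂ) : ℂ :=
  ∑ i, star (v i) * W.mulVec v i

/-- The Bell-diagonal matrix `W[a,b,c,d]` with `(α₀,α₁,α₂,α₃) = (a,b,c,d)`: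
`W((k,m),(k',m')) = α_{(m−k) mod 4}` if `k=k', m=m'`; `−1` if `k=m, k'=m', k≠k'`;
`0` otherwise. -/
noncomputable def Wabcd (a b c d : ℝ) : Matrix (Fin 4 × Fin 4) (Fin 4 × Fin 4) ℂ :=
  fun p q =>
    if p.1 = q.1 ∧ p.2 = q.2 then ((![a, b, c, d] (p.2 - p.1) : ℝ) : ℂ)
    else if p.1 = p.2 ∧ q.1 = q.2 ∧ p.1 ≠ q.1 then -1
    else 0

/-- The class-I witness `W_I(θ)`. -/
noncomputable def WI (θ : ℝ) : Matrix (Fin 4 × Fin 4) (Fin 4 × Fin 4) ℂ :=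
  Wabcd ((2 - Real.sin θ) / 2) ((1 + Real.cos θ) / 2)
        (2 - (2 - Real.sin θ) / 2) (1 - (1 + Real.cos θ) / 2)

/-- The class-II witness `W_II(θ)`. -/
noncomputable def WII (θ : ℝ) : Matrix (Fin 4 × Fin 4) (Fin 4 × Fin 4) ℂ :=
  Wabcd ((1 + Real.cos θ) / 2) ((2 - Real.sin θ) / 2)
        (1 - (1 + Real.cos θ) / 2) (2 - (2 - Real.sin θ) / 2)

/-- The maximally entangled vector `Ψ(j,j') = (−1)^{j+1}/2` if `j = j'`, else `0`. -/
noncomputable def PsiVec : Fin 4 × Fin 4 → ℂ :=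
  fun p => if p.1 = p.2 then ((-1 : ℂ) ^ ((p.1 : ℕ) + 1)) / 2 else 0

/-- The rank-one projector `P = |Ψ⟩⟨Ψ|`. -/
noncomputable def Pmat : Matrix (Fin 4 × Fin 4) (Fin 4 × Fin 4) ℂ :=
  fun u v => PsiVec u * star (PsiVec v)
/-!
Every generator lies in the kernel of the alternating diagonal functional
`v ↦ v(0,0) - v(1,1) + v(2,2) - v(3,3)`: for unimodular `ψ` the diagonal of `ψ ⊗ ψ̄` is constantly
`1`, and the three extra vectors have diagonals `s c (e₀ + e₁)`, `s c (e₁ + e₂)`, `s c (e₂ + e₃)`.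
Conversely, averaging `ψ ⊗ ψ̄` against characters of phases placed at two sites `k ≠ m` isolates
the matrix unit at `(k, m)`, so the unimodular products span every vector with zero diagonal, and
since `s c ≠ 0` the three extra vectors supply the missing diagonal directions of the kernel,
a hyperplane of `ℂ¹⁶`.
-/

variable {ι : Type*}

noncomputable def selfTensor (ψ : ι → ℂ) : ι × ι → ℂ := fun p => ψ p.1 * star (ψ p.2)

lemma selfTensor_apply_self {ψ : ι → ℂ} {ℓ : ι} (hψ : ‖ψ ℓ‖ = 1) : selfTensor ψ (ℓ, ℓ) = 1 := by
  simp [selfTensor, Complex.mul_conj, Complex.normSq_eq_norm_sq, hψ]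

def unimodularSelfTensors (ι : Type*) : Set (ι × ι → ℂ) :=
  {v | ∃ ψ : ι → ℂ, (∀ ℓ, ‖ψ ℓ‖ = 1) ∧ v = selfTensor ψ}

def twoPhase [DecidableEq ι] (k m : ι) (a b : ℂ) : ι → ℂ :=
  fun ℓ => if ℓ = k then a else if ℓ = m then b else 1

/-- With phases `a, b` at `k, m`, entry `(p, q)` of the summand is
`ā b · a ^ (δ p k - δ q k) · b ^ (δ p m - δ q m)`, and summing over fourth roots of unity kills every
nonconstant monomial: only `(p, q) = (k, m)` survives. -/
lemma sum_fourthRoots_selfTensor_twoPhase [DecidableEq ι] {k m : ι} (hkm : k ≠ m) :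
    ∑ j : Fin 4 × Fin 4, (star (I ^ (j.1 : ℕ)) * I ^ (j.2 : ℕ)) •
      selfTensor (twoPhase k m (I ^ (j.1 : ℕ)) (I ^ (j.2 : ℕ))) = (16 : ℂ) • Pi.single (k, m) 1 := by
  ext ⟨p, q⟩
  simp only [Finset.sum_apply, Pi.smul_apply, Fintype.sum_prod_type, Fin.sum_univ_four, selfTensor,
    twoPhase, smul_eq_mul]
  by_cases hpk : p = k <;> by_cases hpm : p = m <;> by_cases hqk : q = k <;> by_cases hqm : q = m <;>
    norm_num [hpk, hpm, hqk, hqm, hkm, hkm.symm, Complex.ext_iff, I_pow_three]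

lemma norm_twoPhase [DecidableEq ι] {k m : ι} {a b : ℂ} (ha : ‖a‖ = 1) (hb : ‖b‖ = 1) (ℓ : ι) :
    ‖twoPhase k m a b ℓ‖ = 1 := by
  unfold twoPhase
  split_ifs <;> simp [ha, hb]

lemma single_mem_span_unimodularSelfTensors [DecidableEq ι] {k m : ι} (hkm : k ≠ m) :
    Pi.single (k, m) 1 ∈ Submodule.span ℂ (unimodularSelfTensors ι) := by
  rw [← Submodule.smul_mem_iff _ (by norm_num : (16 : ℂ) ≠ 0),
    ← sum_fourthRoots_selfTensor_twoPhase hkm]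
  refine Submodule.sum_mem _ fun j _ => Submodule.smul_mem _ _ (Submodule.subset_span ?_)
  exact ⟨_, norm_twoPhase (by simp) (by simp), rfl⟩

lemma mem_span_unimodularSelfTensors_of_diag_eq_zero [Fintype ι] [DecidableEq ι]
    {w : ι × ι → ℂ} (hw : ∀ i, w (i, i) = 0) :
    w ∈ Submodule.span ℂ (unimodularSelfTensors ι) := by
  rw [pi_eq_sum_univ' w]
  refine Submodule.sum_mem _ fun ⟨k, m⟩ _ => ?_
  obtain rfl | hkm := eq_or_ne k m
  · simp [hw]
  · exact Submodule.smul_mem _ _ (single_mem_span_unimodularSelfTensors hkm)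

noncomputable def altDiag : Module.Dual ℂ (Fin 4 × Fin 4 → ℂ) where
  toFun v := v (0, 0) - v (1, 1) + v (2, 2) - v (3, 3)
  map_add' v w := by simp only [Pi.add_apply]; ring
  map_smul' a v := by simp only [Pi.smul_apply, smul_eq_mul, RingHom.id_apply]; ring

lemma altDiag_apply (v : Fin 4 × Fin 4 → ℂ) :
    altDiag v = v (0, 0) - v (1, 1) + v (2, 2) - v (3, 3) := rfl

lemma finrank_ker_altDiag : Module.finrank ℂ (LinearMap.ker altDiag) = 15 := by
  have hne : altDiag ≠ 0 := fun h => by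
    simpa [altDiag_apply] using LinearMap.congr_fun h (Pi.single (0, 0) 1)
  have := Module.Dual.finrank_ker_add_one_of_ne_zero hne
  simp only [Module.finrank_fintype_fun_eq_card, Fintype.card_prod, Fintype.card_fin] at this
  omega

lemma span_union_eq_ker_altDiag {s c : ℂ} (hs : s ≠ 0) (hc : c ≠ 0) :
    Submodule.span ℂ (unimodularSelfTensors (Fin 4) ∪
      {tensorVec ![s, c, 0, 0] ![c, s, 0, 0], tensorVec ![0, s, c, 0] ![0, c, s, 0],
        tensorVec ![0, 0, s, c] ![0, 0, c, s]}) = LinearMap.ker altDiag := by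
  refine le_antisymm (Submodule.span_le.mpr ?_) fun v hv => ?_
  · rintro v (⟨ψ, hψ, rfl⟩ | hv)
    · simp [altDiag_apply, selfTensor_apply_self (hψ _)]
    · rcases hv with rfl | rfl | rfl <;> simp [altDiag_apply, tensorVec, mul_comm]
  · have hv₂₂ : v (2, 2) = v (1, 1) - v (0, 0) + v (3, 3) := by
      rw [LinearMap.mem_ker, altDiag_apply] at hv
      linear_combination hv
    set T₁ := tensorVec ![s, c, 0, 0] ![c, s, 0, 0]
    set T₂ := tensorVec ![0, s, c, 0] ![0, c, s, 0]
    set T₃ := tensorVec ![0, 0, s, c] ![0, 0, c, s]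
    set D := (v (0, 0) / (s * c)) • T₁ + ((v (1, 1) - v (0, 0)) / (s * c)) • T₂
      + (v (3, 3) / (s * c)) • T₃
    have hoff : v - D ∈ Submodule.span ℂ (unimodularSelfTensors (Fin 4)) := by
      refine mem_span_unimodularSelfTensors_of_diag_eq_zero fun i => ?_
      fin_cases i <;> simp [D, T₁, T₂, T₃, tensorVec, hv₂₂] <;> field_simp <;> ring
    rw [← sub_add_cancel v D]
    refine add_mem (Submodule.span_mono Set.subset_union_left hoff) ?_
    refine add_mem (add_mem ?_ ?_) ?_ <;>
      exact Submodule.smul_mem _ _ (Submodule.subset_span (Or.inr (by simp [T₁, T₂, T₃])))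

theorem span_zero_vectors_dim_15 (θ : ℝ) (hθ : θ ∈ Set.Ioo 0 π) :
    letI s : ℝ := Real.sqrt (Real.sin (θ / 2))
    letI c : ℝ := Real.sqrt (Real.cos (θ / 2))
    Module.finrank ℂ
      (Submodule.span ℂ
        ({v : Fin 4 × Fin 4 → ℂ |
            ∃ ψ : Fin 4 → ℂ, (∀ ℓ, ‖ψ ℓ‖ = 1) ∧ v = tensorVec ψ (star ∘ ψ)} ∪
          {tensorVec ![(s : ℂ), (c : ℂ), 0, 0] ![(c : ℂ), (s : ℂ), 0, 0],
           tensorVec ![0, (s : ℂ), (c : ℂ), 0] ![0, (c : ℂ), (s : ℂ), 0],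
           tensorVec ![0, 0, (s : ℂ), (c : ℂ)] ![0, 0, (c : ℂ), (s : ℂ)]}))
      = 15 := by
  obtain ⟨hθ₀, hθπ⟩ := hθ
  have hs : ((√(Real.sin (θ / 2)) : ℝ) : ℂ) ≠ 0 := ofReal_ne_zero.mpr
    (Real.sqrt_pos.mpr (sin_pos_of_pos_of_lt_pi (by linarith) (by linarith))).ne'
  have hc : ((√(Real.cos (θ / 2)) : ℝ) : ℂ) ≠ 0 := ofReal_ne_zero.mpr
    (Real.sqrt_pos.mpr (cos_pos_of_mem_Ioo ⟨by linarith, by linarith⟩)).ne'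
  rw [← finrank_ker_altDiag, ← span_union_eq_ker_altDiag hs hc]
  rfl
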